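/- Under Assumptions 1(1) and 2, the operator Φ has at most one nonzero fixed point in L¹₊(Ω): if φ₁, φ₂ ∈ L¹(Ω) are nonnegative, nonzero, and satisfy φᵢ(x) = N(x)∫_Ω Θ(x,σ)N(σ)(1 − e^{−φᵢ(σ)/N(σ)}) dσ for a.e. x (i = 1,2), then φ₁ = φ₂ a.e. -/

import Mathlib

open MeasureTheory Set

/-!
By Assumption 1(1), `Θ(x,σ)` lies between `L a(x) c(σ)` and `α L a(x) c(σ)`, so a nonzero fixed
point `φ` lies between `N L a I` and `α N L a I`, where `I = ∫ c N (1 - e^{-φ/N}) > 0`. For two such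
fixed points the largest `t` with `t φ₁ ≤ φ₂` is therefore positive and finite. If `t < 1`, strict
concavity of `u ↦ 1 - e^{-u}` gives `Φ(t φ₁) ≥ t φ₁ + δ N L a` with `δ > 0`, and monotonicity of `Φ`
yields `(t + ε) φ₁ ≤ φ₂`, contradicting maximality. Hence `φ₁ ≤ φ₂`, and symmetrically `φ₂ ≤ φ₁`.
-/

/-- `Θ(x,σ) = ∫_0^∞ A(τ,x,σ) dτ`. -/
noncomputable def Theta {n : ℕ} (A : ℝ → (Fin n → ℝ) → (Fin n → ℝ) → ℝ)
    (x σ : Fin n → ℝ) : ℝ :=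
  ∫ τ in Ici (0:ℝ), A τ x σ

lemma mul_one_sub_exp_neg_le {t : ℝ} (u : ℝ) (ht0 : 0 ≤ t) (ht1 : t ≤ 1) :
    t * (1 - Real.exp (-u)) ≤ 1 - Real.exp (-(t * u)) := by
  have h := convexOn_exp.2 (mem_univ (-u)) (mem_univ 0) ht0 (sub_nonneg.2 ht1) (by ring)
  simp only [smul_eq_mul, mul_zero, add_zero, Real.exp_zero, mul_neg, mul_one] at h
  linarith

lemma mul_one_sub_exp_neg_lt {t u : ℝ} (ht0 : 0 < t) (ht1 : t < 1) (hu : 0 < u) :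
    t * (1 - Real.exp (-u)) < 1 - Real.exp (-(t * u)) := by
  have h := strictConvexOn_exp.2 (mem_univ (-u)) (mem_univ 0) (by simpa using hu.ne') ht0
    (sub_pos.2 ht1) (by ring)
  simp only [smul_eq_mul, mul_zero, add_zero, Real.exp_zero, mul_neg, mul_one] at h
  linarith

lemma integrable_and_integral_sandwich {Y : Type*} [MeasurableSpace Y] {ν : Measure Y}
    {f g : Y → ℝ} {lo hi : ℝ} (hg : Integrable g ν) (hf : AEStronglyMeasurable f ν)
    (h : ∀ᵐ y ∂ν, lo * g y ≤ f y ∧ f y ≤ hi * g y) :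
    Integrable f ν ∧ lo * ∫ y, g y ∂ν ≤ ∫ y, f y ∂ν ∧ ∫ y, f y ∂ν ≤ hi * ∫ y, g y ∂ν := by
  have hlo : (fun y => lo * g y) ≤ᵐ[ν] f := h.mono fun _ hy => hy.1
  have hhi : f ≤ᵐ[ν] fun y => hi * g y := h.mono fun _ hy => hy.2
  have hf_int := integrable_of_le_of_le hf hlo hhi (hg.const_mul lo) (hg.const_mul hi)
  refine ⟨hf_int, ?_, ?_⟩
  · rw [← integral_const_mul]
    exact integral_mono_ae (hg.const_mul lo) hf_int hlo
  · rw [← integral_const_mul]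
    exact integral_mono_ae hf_int (hg.const_mul hi) hhi

lemma isClosed_setOf_ae_mul_le {Y : Type*} [MeasurableSpace Y] {ν : Measure Y} (f g : Y → ℝ) :
    IsClosed {t : ℝ | ∀ᵐ y ∂ν, t * f y ≤ g y} := by
  refine IsSeqClosed.isClosed fun t s ht hts => ?_
  filter_upwards [ae_all_iff.2 ht] with y hy
  exact le_of_tendsto' (hts.mul_const (f y)) hy

variable {X : Type*}

noncomputable def saturation (N φ : X → ℝ) (σ : X) : ℝ :=
  N σ * (1 - Real.exp (-(φ σ / N σ)))

noncomputable def Phi [MeasurableSpace X] (μ : Measure X) (K : X → X → ℝ) (N φ : X → ℝ)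
    (x : X) : ℝ :=
  N x * ∫ σ, K x σ * saturation N φ σ ∂μ

section saturation

variable {N φ ψ : X → ℝ} {σ : X}

lemma saturation_nonneg (hN : 0 < N σ) (hφ : 0 ≤ φ σ) : 0 ≤ saturation N φ σ := by
  have : Real.exp (-(φ σ / N σ)) ≤ 1 := Real.exp_le_one_iff.2 (by simpa using div_nonneg hφ hN.le)
  exact mul_nonneg hN.le (by linarith)

lemma saturation_le (hN : 0 < N σ) : saturation N φ σ ≤ N σ := by
  have := Real.exp_pos (-(φ σ / N σ))
  unfold saturation
  nlinarith

lemma saturation_mono (hN : 0 < N σ) (h : φ σ ≤ ψ σ) : saturation N φ σ ≤ saturation N ψ σ := by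
  have : Real.exp (-(ψ σ / N σ)) ≤ Real.exp (-(φ σ / N σ)) :=
    Real.exp_le_exp.2 (neg_le_neg (div_le_div_of_nonneg_right h hN.le))
  exact mul_le_mul_of_nonneg_left (by linarith) hN.le

lemma saturation_pos (hN : 0 < N σ) (hφ : 0 < φ σ) : 0 < saturation N φ σ := by
  have : Real.exp (-(φ σ / N σ)) < 1 := Real.exp_lt_one_iff.2 (by simpa using div_pos hφ hN)
  exact mul_pos hN (by linarith)

lemma mul_saturation_le {t : ℝ} (ht0 : 0 ≤ t) (ht1 : t ≤ 1) (hN : 0 < N σ) :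
    t * saturation N φ σ ≤ saturation N (fun σ => t * φ σ) σ := by
  have := mul_one_sub_exp_neg_le (φ σ / N σ) ht0 ht1
  simp only [saturation, mul_div_assoc]
  nlinarith

lemma mul_saturation_lt {t : ℝ} (ht0 : 0 < t) (ht1 : t < 1) (hN : 0 < N σ) (hφ : 0 < φ σ) :
    t * saturation N φ σ < saturation N (fun σ => t * φ σ) σ := by
  have := mul_one_sub_exp_neg_lt ht0 ht1 (div_pos hφ hN)
  simp only [saturation, mul_div_assoc]
  nlinarith

lemma aestronglyMeasurable_saturation [MeasurableSpace X] {μ : Measure X} (hN : AEMeasurable N μ)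
    (hφ : AEMeasurable φ μ) : AEStronglyMeasurable (saturation N φ) μ := by
  unfold saturation
  fun_prop

noncomputable def saturationGap (N φ : X → ℝ) (t : ℝ) (σ : X) : ℝ :=
  saturation N (fun σ => t * φ σ) σ - t * saturation N φ σ

end saturation

variable [MeasurableSpace X]

structure IsNonzeroFixedPt (μ : Measure X) (K : X → X → ℝ) (N φ : X → ℝ) : Prop where
  integrable : Integrable φ μ
  nonneg : ∀ᵐ x ∂μ, 0 ≤ φ x
  ne_zero : ¬ φ =ᵐ[μ] 0
  eq_Phi : φ =ᵐ[μ] Phi μ K N φ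

/-- Assumptions 1(1) and 2 for a general kernel `K`; for `K = Θ` one takes `k = L a`. -/
structure KernelHypotheses (μ : Measure X) (K : X → X → ℝ) (N k c : X → ℝ) (α : ℝ) : Prop where
  integrable_N : Integrable N μ
  N_pos : ∀ᵐ x ∂μ, 0 < N x
  measurable_c : Measurable c
  c_nonneg : ∀ x, 0 ≤ c x
  integrable_c_mul_N : Integrable (fun x => c x * N x) μ
  integral_c_mul_pos : ∀ φ : X → ℝ, Integrable φ μ → (∀ᵐ x ∂μ, 0 ≤ φ x) → ¬ φ =ᵐ[μ] 0 →
    0 < ∫ x, c x * φ x ∂μ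
  aestronglyMeasurable_K : ∀ x, AEStronglyMeasurable (K x) μ
  K_nonneg : ∀ x σ, 0 ≤ K x σ
  K_bounds : ∀ᵐ x ∂μ, ∀ᵐ σ ∂μ, k x * c σ ≤ K x σ ∧ K x σ ≤ α * (k x * c σ)
  α_pos : 0 < α

namespace KernelHypotheses

variable {μ : Measure X} {K : X → X → ℝ} {N k c G φ φ₁ φ₂ : X → ℝ} {α : ℝ}
  (h : KernelHypotheses μ K N k c α)
include h

lemma integrable_of_le_N (hGm : AEStronglyMeasurable G μ)
    (hG : ∀ᵐ σ ∂μ, 0 ≤ G σ ∧ G σ ≤ N σ) : Integrable G μ :=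
  integrable_of_le_of_le hGm (hG.mono fun _ h => h.1) (hG.mono fun _ h => h.2)
    (integrable_zero _ _ _) h.integrable_N

lemma integrable_c_mul (hGm : AEStronglyMeasurable G μ)
    (hG : ∀ᵐ σ ∂μ, 0 ≤ G σ ∧ G σ ≤ N σ) : Integrable (fun σ => c σ * G σ) μ :=
  integrable_of_le_of_le (h.measurable_c.aestronglyMeasurable.mul hGm)
    (hG.mono fun σ hσ => mul_nonneg (h.c_nonneg σ) hσ.1)
    (hG.mono fun σ hσ => mul_le_mul_of_nonneg_left hσ.2 (h.c_nonneg σ))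
    (integrable_zero _ _ _) h.integrable_c_mul_N

lemma integral_kernel_bounds (hGm : AEStronglyMeasurable G μ)
    (hG : ∀ᵐ σ ∂μ, 0 ≤ G σ ∧ G σ ≤ N σ) :
    ∀ᵐ x ∂μ, Integrable (fun σ => K x σ * G σ) μ ∧
      k x * ∫ σ, c σ * G σ ∂μ ≤ ∫ σ, K x σ * G σ ∂μ ∧
      ∫ σ, K x σ * G σ ∂μ ≤ α * k x * ∫ σ, c σ * G σ ∂μ := by
  filter_upwards [h.K_bounds] with x hx
  refine integrable_and_integral_sandwich (h.integrable_c_mul hGm hG)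
    ((h.aestronglyMeasurable_K x).mul hGm) ?_
  filter_upwards [hx, hG] with σ hKσ hGσ
  constructor
  · linarith [mul_le_mul_of_nonneg_right hKσ.1 hGσ.1]
  · linarith [mul_le_mul_of_nonneg_right hKσ.2 hGσ.1]

lemma integral_c_mul_pos_of_le (hGm : AEStronglyMeasurable G μ)
    (hG : ∀ᵐ σ ∂μ, 0 ≤ G σ ∧ G σ ≤ N σ) (hG0 : ¬ G =ᵐ[μ] 0) : 0 < ∫ σ, c σ * G σ ∂μ :=
  h.integral_c_mul_pos G (h.integrable_of_le_N hGm hG) (hG.mono fun _ h => h.1) hG0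

lemma saturation_bounds (hφ : ∀ᵐ σ ∂μ, 0 ≤ φ σ) :
    ∀ᵐ σ ∂μ, 0 ≤ saturation N φ σ ∧ saturation N φ σ ≤ N σ := by
  filter_upwards [h.N_pos, hφ] with σ hN hφσ
  exact ⟨saturation_nonneg hN hφσ, saturation_le hN⟩

lemma aestronglyMeasurable_saturation (hφ : AEMeasurable φ μ) :
    AEStronglyMeasurable (saturation N φ) μ :=
  _root_.aestronglyMeasurable_saturation h.integrable_N.aemeasurable hφ

lemma integral_c_mul_saturation_pos (hφ : IsNonzeroFixedPt μ K N φ) :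
    0 < ∫ σ, c σ * saturation N φ σ ∂μ := by
  refine h.integral_c_mul_pos_of_le (h.aestronglyMeasurable_saturation hφ.integrable.aemeasurable)
    (h.saturation_bounds hφ.nonneg) fun h0 => hφ.ne_zero ?_
  filter_upwards [h0, h.N_pos, hφ.nonneg] with σ h0σ hN hφσ
  by_contra hne
  exact (saturation_pos hN (lt_of_le_of_ne hφσ (Ne.symm hne))).ne' h0σ

lemma fixedPt_bounds (hφ : IsNonzeroFixedPt μ K N φ) :
    ∀ᵐ x ∂μ, N x * k x * ∫ σ, c σ * saturation N φ σ ∂μ ≤ φ x ∧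
      φ x ≤ α * (N x * k x * ∫ σ, c σ * saturation N φ σ ∂μ) := by
  filter_upwards [hφ.eq_Phi, h.N_pos, h.integral_kernel_bounds
    (h.aestronglyMeasurable_saturation hφ.integrable.aemeasurable) (h.saturation_bounds hφ.nonneg)]
    with x hφx hN ⟨_, hlo, hhi⟩
  rw [hφx, Phi]
  constructor
  · linarith [mul_le_mul_of_nonneg_left hlo hN.le]
  · linarith [mul_le_mul_of_nonneg_left hhi hN.le]

lemma Phi_mono {ψ : X → ℝ} (hφm : AEMeasurable φ μ) (hψm : AEMeasurable ψ μ)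
    (hφ : ∀ᵐ σ ∂μ, 0 ≤ φ σ) (hφψ : φ ≤ᵐ[μ] ψ) : Phi μ K N φ ≤ᵐ[μ] Phi μ K N ψ := by
  have hψ : ∀ᵐ σ ∂μ, 0 ≤ ψ σ := by filter_upwards [hφ, hφψ] with σ h1 h2 using h1.trans h2
  filter_upwards [h.N_pos, h.integral_kernel_bounds (h.aestronglyMeasurable_saturation hφm)
    (h.saturation_bounds hφ), h.integral_kernel_bounds (h.aestronglyMeasurable_saturation hψm)
    (h.saturation_bounds hψ)] with x hN ⟨hφi, _⟩ ⟨hψi, _⟩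
  refine mul_le_mul_of_nonneg_left (integral_mono_ae hφi hψi ?_) hN.le
  filter_upwards [h.N_pos, hφψ] with σ hNσ hσ
  exact mul_le_mul_of_nonneg_left (saturation_mono hNσ hσ) (h.K_nonneg x σ)

lemma saturationGap_bounds {t : ℝ} (ht0 : 0 ≤ t) (ht1 : t ≤ 1) (hφ : ∀ᵐ σ ∂μ, 0 ≤ φ σ) :
    ∀ᵐ σ ∂μ, 0 ≤ saturationGap N φ t σ ∧ saturationGap N φ t σ ≤ N σ := by
  filter_upwards [h.N_pos, hφ] with σ hN hφσ
  have := mul_nonneg ht0 (saturation_nonneg hN hφσ)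
  rw [saturationGap]
  exact ⟨sub_nonneg.2 (mul_saturation_le ht0 ht1 hN),
    by linarith [saturation_le (φ := fun σ => t * φ σ) hN]⟩

lemma aestronglyMeasurable_saturationGap {t : ℝ} (hφm : AEMeasurable φ μ) :
    AEStronglyMeasurable (saturationGap N φ t) μ :=
  (h.aestronglyMeasurable_saturation (hφm.const_mul t)).sub
    ((h.aestronglyMeasurable_saturation hφm).const_mul t)

lemma mul_Phi_add_le_Phi_mul {t : ℝ} (ht0 : 0 ≤ t) (ht1 : t ≤ 1) (hφm : AEMeasurable φ μ)
    (hφ : ∀ᵐ σ ∂μ, 0 ≤ φ σ) :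
    ∀ᵐ x ∂μ, t * Phi μ K N φ x +
        N x * (k x * ∫ σ, c σ * saturationGap N φ t σ ∂μ)
      ≤ Phi μ K N (fun σ => t * φ σ) x := by
  filter_upwards [h.N_pos,
    h.integral_kernel_bounds (h.aestronglyMeasurable_saturation hφm) (h.saturation_bounds hφ),
    h.integral_kernel_bounds (h.aestronglyMeasurable_saturationGap hφm)
      (h.saturationGap_bounds ht0 ht1 hφ)]
    with x hN ⟨hφi, _, _⟩ ⟨hgi, hlo, _⟩
  have hsplit : ∫ σ, K x σ * saturation N (fun σ => t * φ σ) σ ∂μ =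
      t * ∫ σ, K x σ * saturation N φ σ ∂μ +
        ∫ σ, K x σ * saturationGap N φ t σ ∂μ := by
    rw [← integral_const_mul, ← integral_add (hφi.const_mul t) hgi]
    congr 1 with σ
    rw [saturationGap]
    ring
  rw [Phi, Phi, hsplit]
  nlinarith [mul_le_mul_of_nonneg_left hlo hN.le]

lemma integral_c_mul_saturationGap_pos {t : ℝ} (ht0 : 0 < t) (ht1 : t < 1)
    (hφ : IsNonzeroFixedPt μ K N φ) : 0 < ∫ σ, c σ * saturationGap N φ t σ ∂μ := by
  refine h.integral_c_mul_pos_of_le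
    (h.aestronglyMeasurable_saturationGap hφ.integrable.aemeasurable)
    (h.saturationGap_bounds ht0.le ht1.le hφ.nonneg) fun h0 => hφ.ne_zero ?_
  filter_upwards [h0, h.N_pos, hφ.nonneg] with σ h0σ hN hφσ
  by_contra hne
  have := mul_saturation_lt ht0 ht1 hN (lt_of_le_of_ne hφσ (Ne.symm hne))
  simp only [saturationGap, Pi.zero_apply] at h0σ
  linarith

lemma exists_add_mul_le (hφ₁ : IsNonzeroFixedPt μ K N φ₁) (hφ₂ : IsNonzeroFixedPt μ K N φ₂)
    {t : ℝ} (ht0 : 0 < t) (ht1 : t < 1) (ht : ∀ᵐ x ∂μ, t * φ₁ x ≤ φ₂ x) :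
    ∃ ε > 0, ∀ᵐ x ∂μ, (t + ε) * φ₁ x ≤ φ₂ x := by
  set I := ∫ σ, c σ * saturation N φ₁ σ ∂μ
  set J := ∫ σ, c σ * saturationGap N φ₁ t σ ∂μ
  have hI : 0 < I := h.integral_c_mul_saturation_pos hφ₁
  have hJ : 0 < J := h.integral_c_mul_saturationGap_pos ht0 ht1 hφ₁
  have hε : 0 < J / (α * I) := div_pos hJ (mul_pos h.α_pos hI)
  have hφm := hφ₁.integrable.aemeasurable
  have hmono := h.Phi_mono (hφm.const_mul t) hφ₂.integrable.aemeasurable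
    (hφ₁.nonneg.mono fun _ hx => mul_nonneg ht0.le hx) ht
  refine ⟨J / (α * I), hε, ?_⟩
  filter_upwards [hφ₁.eq_Phi, hφ₂.eq_Phi, h.fixedPt_bounds hφ₁, hmono,
    h.mul_Phi_add_le_Phi_mul ht0.le ht1.le hφm hφ₁.nonneg] with x h₁ h₂ ⟨_, hup⟩ hmx hcx
  have hεφ : J / (α * I) * φ₁ x ≤ N x * (k x * J) := by
    calc J / (α * I) * φ₁ x ≤ J / (α * I) * (α * (N x * k x * I)) :=
          mul_le_mul_of_nonneg_left hup hε.le
      _ = N x * (k x * J) := by field_simp [h.α_pos.ne', hI.ne']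
  calc (t + J / (α * I)) * φ₁ x ≤ t * Phi μ K N φ₁ x + N x * (k x * J) := by
        rw [← h₁]; linarith
    _ ≤ Phi μ K N φ₂ x := hcx.trans hmx
    _ = φ₂ x := h₂.symm

lemma frequently_N_mul_k_pos (hφ : IsNonzeroFixedPt μ K N φ) : ∃ᵐ x ∂μ, 0 < N x * k x := by
  have hI := h.integral_c_mul_saturation_pos hφ
  refine (Filter.not_eventually.mp hφ.ne_zero).mp ?_
  filter_upwards [hφ.nonneg, h.fixedPt_bounds hφ] with x h0 ⟨_, hup⟩ hne
  have hpos : 0 < α * ((N x * k x) * ∫ σ, c σ * saturation N φ σ ∂μ) :=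
    (lt_of_le_of_ne h0 (Ne.symm hne)).trans_le hup
  exact pos_of_mul_pos_left (pos_of_mul_pos_right hpos h.α_pos.le) hI.le

lemma ae_le_of_isNonzeroFixedPt (hφ₁ : IsNonzeroFixedPt μ K N φ₁)
    (hφ₂ : IsNonzeroFixedPt μ K N φ₂) : φ₁ ≤ᵐ[μ] φ₂ := by
  set I₁ := ∫ σ, c σ * saturation N φ₁ σ ∂μ
  set I₂ := ∫ σ, c σ * saturation N φ₂ σ ∂μ
  have hI₁ : 0 < I₁ := h.integral_c_mul_saturation_pos hφ₁
  have hI₂ : 0 < I₂ := h.integral_c_mul_saturation_pos hφ₂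
  have hb₁ := h.fixedPt_bounds hφ₁
  have hb₂ := h.fixedPt_bounds hφ₂
  set S := {t : ℝ | ∀ᵐ x ∂μ, t * φ₁ x ≤ φ₂ x}
  have ht₀ : I₂ / (α * I₁) ∈ S := by
    filter_upwards [hb₁, hb₂] with x ⟨_, hup⟩ ⟨hlo, _⟩
    calc I₂ / (α * I₁) * φ₁ x ≤ I₂ / (α * I₁) * (α * (N x * k x * I₁)) :=
          mul_le_mul_of_nonneg_left hup (div_pos hI₂ (mul_pos h.α_pos hI₁)).le
      _ = N x * k x * I₂ := by field_simp [h.α_pos.ne', hI₁.ne']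
      _ ≤ φ₂ x := hlo
  have hS_bdd : BddAbove S := by
    refine ⟨α * I₂ / I₁, fun t (ht : ∀ᵐ x ∂μ, t * φ₁ x ≤ φ₂ x) => ?_⟩
    obtain ⟨x, hNk, htx, ⟨hlo, _⟩, ⟨_, hup⟩⟩ :=
      ((h.frequently_N_mul_k_pos hφ₁).and_eventually (ht.and (hb₁.and hb₂))).exists
    rw [le_div_iff₀ hI₁]
    rcases le_or_gt t 0 with ht0 | ht0
    · nlinarith [mul_pos h.α_pos hI₂]
    · nlinarith [mul_le_mul_of_nonneg_left hlo ht0.le]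
  have hT : sSup S ∈ S := (isClosed_setOf_ae_mul_le φ₁ φ₂).csSup_mem ⟨_, ht₀⟩ hS_bdd
  have h1T : 1 ≤ sSup S := by
    by_contra! hT1
    have hT0 : 0 < sSup S := (div_pos hI₂ (mul_pos h.α_pos hI₁)).trans_le (le_csSup hS_bdd ht₀)
    obtain ⟨ε, hε, hεS⟩ := h.exists_add_mul_le hφ₁ hφ₂ hT0 hT1 hT
    linarith [le_csSup hS_bdd hεS]
  filter_upwards [hT, hφ₁.nonneg] with x hx h0
  nlinarith

lemma ae_eq_of_isNonzeroFixedPt (hφ₁ : IsNonzeroFixedPt μ K N φ₁)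
    (hφ₂ : IsNonzeroFixedPt μ K N φ₂) : φ₁ =ᵐ[μ] φ₂ :=
  (h.ae_le_of_isNonzeroFixedPt hφ₁ hφ₂).antisymm (h.ae_le_of_isNonzeroFixedPt hφ₂ hφ₁)

end KernelHypotheses

section Theta

variable {n : ℕ} {A : ℝ → (Fin n → ℝ) → (Fin n → ℝ) → ℝ}

lemma measurable_uncurry_Theta
    (hA : Measurable fun p : ℝ × (Fin n → ℝ) × (Fin n → ℝ) => A p.1 p.2.1 p.2.2) :
    Measurable (Function.uncurry (Theta A)) := by
  have hA' : StronglyMeasurable fun q : ((Fin n → ℝ) × (Fin n → ℝ)) × ℝ => A q.2 q.1.1 q.1.2 :=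
    (hA.comp (measurable_snd.prodMk
      (measurable_fst.fst.prodMk measurable_fst.snd))).stronglyMeasurable
  exact hA'.integral_prod_right'.measurable

lemma Theta_bounds {α : ℝ} {a c : (Fin n → ℝ) → ℝ} {b : ℝ → ℝ} {x σ : Fin n → ℝ}
    (hA : Measurable fun p : ℝ × (Fin n → ℝ) × (Fin n → ℝ) => A p.1 p.2.1 p.2.2)
    (hb : IntegrableOn b (Ici 0))
    (hAb : ∀ τ ∈ Ici (0:ℝ), a x * b τ * c σ ≤ A τ x σ ∧ A τ x σ ≤ α * (a x * b τ * c σ)) :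
    (∫ τ in Ici 0, b τ) * a x * c σ ≤ Theta A x σ ∧
      Theta A x σ ≤ α * ((∫ τ in Ici 0, b τ) * a x * c σ) := by
  obtain ⟨-, hlo, hhi⟩ := integrable_and_integral_sandwich (f := fun τ => A τ x σ)
    (lo := a x * c σ) (hi := α * (a x * c σ))
    hb (hA.comp (measurable_id.prodMk (measurable_const (a := (x, σ))))).aestronglyMeasurable
    ((ae_restrict_mem measurableSet_Ici).mono fun τ hτ => by
      constructor <;> linarith [hAb τ hτ])
  constructor <;> simp only [Theta] <;> linarith

end Theta

theorem Phi_fixed_point_unique_general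
    {n : ℕ} (Ω : Set (Fin n → ℝ)) (hΩ : MeasurableSet Ω)
    (N : (Fin n → ℝ) → ℝ)
    (hNint : IntegrableOn N Ω)
    (hNpos : ∀ᵐ x ∂(volume.restrict Ω), 0 < N x)
    (A : ℝ → (Fin n → ℝ) → (Fin n → ℝ) → ℝ)
    (hAmeas : Measurable (fun p : ℝ × (Fin n → ℝ) × (Fin n → ℝ) => A p.1 p.2.1 p.2.2))
    (hAnn : ∀ τ x σ, 0 ≤ A τ x σ)
    (α : ℝ) (hα : 1 < α)
    (a : (Fin n → ℝ) → ℝ) (b : ℝ → ℝ) (c : (Fin n → ℝ) → ℝ)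
    (hcmeas : Measurable c)
    (hcnn : ∀ σ, 0 ≤ c σ)
    (hbint : IntegrableOn b (Ici 0))
    (hcN : IntegrableOn (fun x => c x * N x) Ω)
    (hAbound : ∀ τ ∈ Ici (0:ℝ), ∀ x ∈ Ω, ∀ σ ∈ Ω,
      a x * b τ * c σ ≤ A τ x σ ∧ A τ x σ ≤ α * (a x * b τ * c σ))
    -- Assumption 2
    (hcpos : ∀ φ : (Fin n → ℝ) → ℝ, IntegrableOn φ Ω →
      (∀ᵐ x ∂(volume.restrict Ω), 0 ≤ φ x) → ¬ φ =ᵐ[volume.restrict Ω] 0 →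
      0 < ∫ x in Ω, c x * φ x)
    -- two nonzero nonnegative fixed points of Φ
    (φ₁ φ₂ : (Fin n → ℝ) → ℝ)
    (hφ₁int : IntegrableOn φ₁ Ω) (hφ₂int : IntegrableOn φ₂ Ω)
    (hφ₁nn : ∀ᵐ x ∂(volume.restrict Ω), 0 ≤ φ₁ x)
    (hφ₂nn : ∀ᵐ x ∂(volume.restrict Ω), 0 ≤ φ₂ x)
    (hφ₁ne : ¬ φ₁ =ᵐ[volume.restrict Ω] 0)
    (hφ₂ne : ¬ φ₂ =ᵐ[volume.restrict Ω] 0)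
    (hfix₁ : ∀ᵐ x ∂(volume.restrict Ω),
      φ₁ x = N x * ∫ σ in Ω, Theta A x σ * N σ * (1 - Real.exp (-(φ₁ σ / N σ))))
    (hfix₂ : ∀ᵐ x ∂(volume.restrict Ω),
      φ₂ x = N x * ∫ σ in Ω, Theta A x σ * N σ * (1 - Real.exp (-(φ₂ σ / N σ)))) :
    φ₁ =ᵐ[volume.restrict Ω] φ₂ := by
  set μ := volume.restrict Ω
  have hK : KernelHypotheses μ (Theta A) N (fun x => (∫ τ in Ici 0, b τ) * a x) c α :=
    { integrable_N := hNint
      N_pos := hNpos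
      measurable_c := hcmeas
      c_nonneg := hcnn
      integrable_c_mul_N := hcN
      integral_c_mul_pos := hcpos
      aestronglyMeasurable_K := fun _ =>
        (measurable_uncurry_Theta hAmeas).of_uncurry_left.aestronglyMeasurable
      K_nonneg := fun x σ => integral_nonneg fun τ => hAnn τ x σ
      K_bounds := by
        filter_upwards [ae_restrict_mem hΩ] with x hx
        filter_upwards [ae_restrict_mem hΩ] with σ hσ
        exact Theta_bounds hAmeas hbint fun τ hτ => hAbound τ hτ x hx σ hσ
      α_pos := zero_lt_one.trans hα }
  have hfix : ∀ φ : (Fin n → ℝ) → ℝ, (∀ᵐ x ∂μ,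
      φ x = N x * ∫ σ in Ω, Theta A x σ * N σ * (1 - Real.exp (-(φ σ / N σ)))) →
      φ =ᵐ[μ] Phi μ (Theta A) N φ := fun φ hφ =>
    hφ.mono fun x hx => by simp only [hx, Phi, saturation, mul_assoc, μ]
  exact hK.ae_eq_of_isNonzeroFixedPt ⟨hφ₁int, hφ₁nn, hφ₁ne, hfix φ₁ hfix₁⟩
    ⟨hφ₂int, hφ₂nn, hφ₂ne, hfix φ₂ hfix₂⟩

/-- under Assumptions 1(1) and 2, the operator
`(Φφ)(x) = N(x) ∫_Ω Θ(x,σ) N(σ)(1 - e^{-φ(σ)/N(σ)}) dσ` has at most one nonzero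
fixed point in the positive cone of L¹(Ω). -/
theorem Phi_fixed_point_unique
    {n : ℕ} (Ω : Set (Fin n → ℝ)) (hΩ : MeasurableSet Ω)
    (N : (Fin n → ℝ) → ℝ) (hNmeas : Measurable N) (hNnn : ∀ x, 0 ≤ N x)
    (hNint : IntegrableOn N Ω)
    (hNpos : ∀ᵐ x ∂(volume.restrict Ω), 0 < N x)
    (A : ℝ → (Fin n → ℝ) → (Fin n → ℝ) → ℝ)
    (hAmeas : Measurable (fun p : ℝ × (Fin n → ℝ) × (Fin n → ℝ) => A p.1 p.2.1 p.2.2))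
    (hAnn : ∀ τ x σ, 0 ≤ A τ x σ)
    (α : ℝ) (hα : 1 < α)
    (a : (Fin n → ℝ) → ℝ) (b : ℝ → ℝ) (c : (Fin n → ℝ) → ℝ)
    (hameas : Measurable a) (hbmeas : Measurable b) (hcmeas : Measurable c)
    (hann : ∀ x, 0 ≤ a x) (hbnn : ∀ τ, 0 ≤ b τ) (hcnn : ∀ σ, 0 ≤ c σ)
    (haN : IntegrableOn (fun x => a x * N x) Ω)
    (hbint : IntegrableOn b (Ici 0))
    (hcN : IntegrableOn (fun x => c x * N x) Ω)
    (hc2N : IntegrableOn (fun x => c x ^ 2 * N x) Ω)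
    (hAbound : ∀ τ ∈ Ici (0:ℝ), ∀ x ∈ Ω, ∀ σ ∈ Ω,
      a x * b τ * c σ ≤ A τ x σ ∧ A τ x σ ≤ α * (a x * b τ * c σ))
    -- Assumption 2
    (haNpos : ∀ f : (Fin n → ℝ) → ℝ, Measurable f → (∀ x, 0 ≤ f x) →
      (∃ M, ∀ x, f x ≤ M) → ¬ f =ᵐ[volume.restrict Ω] 0 →
      0 < ∫ x in Ω, f x * (a x * N x))
    (hcbdd : ∃ M, ∀ x, c x ≤ M)
    (hcpos : ∀ φ : (Fin n → ℝ) → ℝ, IntegrableOn φ Ω →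
      (∀ᵐ x ∂(volume.restrict Ω), 0 ≤ φ x) → ¬ φ =ᵐ[volume.restrict Ω] 0 →
      0 < ∫ x in Ω, c x * φ x)
    -- two nonzero nonnegative fixed points of Φ
    (φ₁ φ₂ : (Fin n → ℝ) → ℝ)
    (hφ₁int : IntegrableOn φ₁ Ω) (hφ₂int : IntegrableOn φ₂ Ω)
    (hφ₁nn : ∀ᵐ x ∂(volume.restrict Ω), 0 ≤ φ₁ x)
    (hφ₂nn : ∀ᵐ x ∂(volume.restrict Ω), 0 ≤ φ₂ x)
    (hφ₁ne : ¬ φ₁ =ᵐ[volume.restrict Ω] 0)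
    (hφ₂ne : ¬ φ₂ =ᵐ[volume.restrict Ω] 0)
    (hfix₁ : ∀ᵐ x ∂(volume.restrict Ω),
      φ₁ x = N x * ∫ σ in Ω, Theta A x σ * N σ * (1 - Real.exp (-(φ₁ σ / N σ))))
    (hfix₂ : ∀ᵐ x ∂(volume.restrict Ω),
      φ₂ x = N x * ∫ σ in Ω, Theta A x σ * N σ * (1 - Real.exp (-(φ₂ σ / N σ)))) :
    φ₁ =ᵐ[volume.restrict Ω] φ₂ :=
  Phi_fixed_point_unique_general Ω hΩ N hNint hNpos A hAmeas hAnn α hα a b c hcmeas hcnn hbint hcN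
    hAbound hcpos φ₁ φ₂ hφ₁int hφ₂int hφ₁nn hφ₂nn hφ₁ne hφ₂ne hfix₁ hfix₂
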